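/- Let R be a commutative ring and R' a subring of R with the same identity element 1, with free algebras R⟨X⟩ = R⟨X₁,...,Xₙ⟩ and R'⟨X⟩ = R'⟨X₁,...,Xₙ⟩. For a subset G ⊆ R'⟨X⟩ the following are equivalent: (i) G is an LM-reduced monic Gröbner basis of the ideal I = ⟨G⟩ in R'⟨X⟩ with respect to a monomial ordering ≺ on the standard R'-basis of R'⟨X⟩; (ii) G is an LM-reduced monic Gröbner basis of the ideal J = ⟨G⟩ in R⟨X⟩ with respect to the same monomial ordering ≺ on the standard R-basis of R⟨X⟩. -/

import Mathlib

open scoped Classical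

/-- Words in the alphabet `X₁,...,Xₙ`: the standard basis `B` of monomials of the free algebra. -/
abbrev Word (n : ℕ) : Type := FreeMonoid (Fin n)

/-- The free `R`-algebra `R⟨X₁,...,Xₙ⟩`, realized as the monoid algebra on words. -/
abbrev FreeAlg (R : Type) [CommRing R] (n : ℕ) : Type := MonoidAlgebra R (Word n)

/-- `v` divides `u` as words: `u = w * v * s` for some words `w, s`. -/
def WordDvd {n : ℕ} (v u : Word n) : Prop := ∃ w s : Word n, u = w * v * s

/-- A monomial ordering on the words in `X₁,...,Xₙ`: a well-ordering `≺` such that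
(M1) `u ≺ v` implies `w*u*s ≺ w*v*s`, and (M2) `w = u*v` implies `u ⪯ w` and `v ⪯ w`. -/
structure MonomialOrdering (n : ℕ) where
  lt : Word n → Word n → Prop
  strictTotal : IsStrictTotalOrder (Word n) lt
  wellFounded : WellFounded lt
  mul_compat : ∀ w u v s : Word n, lt u v → lt (w * u * s) (w * v * s)
  factor_le : ∀ u v : Word n, ¬ lt (u * v) u ∧ ¬ lt (u * v) v

namespace MonomialOrdering

/-- `u ⪯ v` for a monomial ordering. -/
def le {n : ℕ} (o : MonomialOrdering n) (u v : Word n) : Prop := u = v ∨ o.lt u v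

end MonomialOrdering

/-- The leading monomial `LM(f)` of `f`: the `≺`-greatest word occurring in `f`
(with junk value `1` if `f = 0`). -/
noncomputable def LM {R : Type} [CommRing R] {n : ℕ} (o : MonomialOrdering n)
    (f : FreeAlg R n) : Word n :=
  if h : ∃ w, w ∈ f.coeff.support ∧ ∀ u ∈ f.coeff.support, o.le u w then h.choose else 1

/-- The leading coefficient `LC(f)` of `f`: the coefficient of `LM(f)` in `f`. -/
noncomputable def LC {R : Type} [CommRing R] {n : ℕ} (o : MonomialOrdering n)
    (f : FreeAlg R n) : R := f.coeff (LM o f)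

/-- A subset `G` is monic if every `g ∈ G` is nonzero with leading coefficient `1`. -/
def IsMonicSet {R : Type} [CommRing R] {n : ℕ} (o : MonomialOrdering n)
    (G : Set (FreeAlg R n)) : Prop := ∀ g ∈ G, g ≠ 0 ∧ LC o g = 1

/-- `G` is a monic Gröbner basis of the two-sided ideal `I`: a monic subset of `I` such that
the leading monomial of every nonzero `f ∈ I` is divisible by `LM(g)` for some `g ∈ G`. -/
def IsMonicGB {R : Type} [CommRing R] {n : ℕ} (o : MonomialOrdering n)
    (G : Set (FreeAlg R n)) (I : TwoSidedIdeal (FreeAlg R n)) : Prop :=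
  (∀ g ∈ G, g ∈ I) ∧ IsMonicSet o G ∧
    ∀ f : FreeAlg R n, f ∈ I → f ≠ 0 → ∃ g ∈ G, WordDvd (LM o g) (LM o f)

/-- The word `u` viewed as a monomial (with coefficient `1`) of the free algebra. -/
noncomputable def mono (R : Type) [CommRing R] {n : ℕ} (u : Word n) : FreeAlg R n :=
  MonoidAlgebra.single u 1

/-- `f` has a Gröbner representation `f = Σ_{i} λ_i u_i g_i v_i` with
`LM(u_i g_i v_i) ⪯ LM(f)` whenever `λ_i ≠ 0`. -/
def HasGroebnerRep {R : Type} [CommRing R] {n : ℕ} (o : MonomialOrdering n)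
    (G : Set (FreeAlg R n)) (f : FreeAlg R n) : Prop :=
  ∃ (m : ℕ) (lam : Fin m → R) (u v : Fin m → Word n) (g : Fin m → FreeAlg R n),
    (∀ i, g i ∈ G) ∧
    f = ∑ i, lam i • (mono R (u i) * g i * mono R (v i)) ∧
    ∀ i, lam i ≠ 0 → o.le (LM o (mono R (u i) * g i * mono R (v i))) (LM o f)

/-- The set `N(G)` of normal words (mod `G`): words divisible by no `LM(g)`, `g ∈ G`. -/
def NSet {R : Type} [CommRing R] {n : ℕ} (o : MonomialOrdering n)
    (G : Set (FreeAlg R n)) : Set (Word n) :=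
  {u : Word n | ∀ g ∈ G, ¬ WordDvd (LM o g) u}

/-- `f` is a normal element (mod `G`): every word occurring in `f` is normal. -/
def IsNormal {R : Type} [CommRing R] {n : ℕ} (o : MonomialOrdering n)
    (G : Set (FreeAlg R n)) (f : FreeAlg R n) : Prop :=
  ∀ u ∈ f.coeff.support, u ∈ NSet o G

/-- `G` is LM-reduced: `LM(g) ∤ LM(g')` for distinct `g, g' ∈ G`. -/
def LMReduced {R : Type} [CommRing R] {n : ℕ} (o : MonomialOrdering n)
    (G : Set (FreeAlg R n)) : Prop :=
  ∀ g ∈ G, ∀ g' ∈ G, g ≠ g' → ¬ WordDvd (LM o g) (LM o g')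

/-- The canonical inclusion `S⟨X₁,...,Xₙ⟩ → T⟨X₁,...,Xₙ⟩` induced by the coefficient
algebra map `S → T`; it sends `Σ λ_u · u` to `Σ λ_u · u` (coefficients mapped along
`algebraMap S T`). -/
noncomputable def coeffIncl (S : Type) [CommRing S] (T : Type) [CommRing T] [Algebra S T]
    (n : ℕ) : FreeAlg S n →ₐ[S] FreeAlg T n :=
  MonoidAlgebra.lift S (FreeAlg T n) (Word n) (MonoidAlgebra.of T (Word n))

/-!
Over the subring `R'`, division by the monic set `G` makes every element congruent modulo
`⟨G⟩` to a normal element, and the Gröbner property makes that normal element unique. So for a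
normal word `m`, taking the coefficient of `m` in the normal form of each word `w` gives
coefficients `c_w ∈ R'` with `c_m = 1`, `c_w = 0` for `w ≺ m`, and `Σ z_w c_w = 0` for all
`z ∈ ⟨G⟩`. Extended `R`-linearly, this functional still vanishes on the ideal generated by `G`
in `R⟨X⟩`, which is `R`-spanned by the elements `u g v` of `⟨G⟩ ⊆ R'⟨X⟩`. On an element `f` of
that ideal with `LM(f) = m` it returns `LC(f) ≠ 0`, so `LM(f)` cannot be normal. The remaining
conditions transfer because the inclusion preserves supports, hence leading monomials and
leading coefficients.
-/

open MonoidAlgebra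

namespace MonomialOrdering

variable {n : ℕ} (o : MonomialOrdering n)

instance : IsStrictTotalOrder (Word n) o.lt := o.strictTotal

theorem lt_of_le_of_lt {u v w : Word n} (huv : o.le u v) (hvw : o.lt v w) : o.lt u w := by
  rcases huv with rfl | huv
  exacts [hvw, _root_.trans huv hvw]

theorem le_trans {u v w : Word n} (huv : o.le u v) (hvw : o.le v w) : o.le u w := by
  rcases hvw with rfl | hvw
  exacts [huv, Or.inr (o.lt_of_le_of_lt huv hvw)]

theorem mul_le_mul (w s : Word n) {u v : Word n} (h : o.le u v) : o.le (w * u * s) (w * v * s) :=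
  h.imp (congrArg (w * · * s)) (o.mul_compat w u v s)

theorem exists_max {s : Finset (Word n)} (hs : s.Nonempty) :
    ∃ w ∈ s, ∀ u ∈ s, o.le u w := by
  induction hs using Finset.Nonempty.cons_induction with
  | singleton a => exact ⟨a, by simp, by simp [le]⟩
  | cons a s _ _ ih =>
    obtain ⟨w, hw, hmax⟩ := ih
    simp only [Finset.mem_cons, forall_eq_or_imp, exists_eq_or_imp]
    rcases trichotomous_of o.lt a w with h | rfl | h
    · exact Or.inr ⟨w, hw, Or.inr h, hmax⟩
    · exact Or.inl ⟨Or.inl rfl, hmax⟩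
    · exact Or.inl ⟨Or.inl rfl, fun u hu => o.le_trans (hmax u hu) (Or.inr h)⟩

end MonomialOrdering

section LeadingMonomial

variable {n : ℕ} (o : MonomialOrdering n) {R : Type} [CommRing R]

theorem LM_spec {f : FreeAlg R n} (hf : f ≠ 0) :
    LM o f ∈ f.coeff.support ∧ ∀ u ∈ f.coeff.support, o.le u (LM o f) := by
  have hex := o.exists_max (Finsupp.support_nonempty_iff.mpr (coeff_eq_zero.not.mpr hf))
  rw [LM, dif_pos hex]
  exact hex.choose_spec

theorem LM_mem_support {f : FreeAlg R n} (hf : f ≠ 0) : LM o f ∈ f.coeff.support :=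
  (LM_spec o hf).1

theorem le_LM {f : FreeAlg R n} (hf : f ≠ 0) {u : Word n} (hu : u ∈ f.coeff.support) :
    o.le u (LM o f) :=
  (LM_spec o hf).2 u hu

theorem LM_congr_support {R' : Type} [CommRing R'] {f : FreeAlg R n} {g : FreeAlg R' n}
    (h : f.coeff.support = g.coeff.support) : LM o f = LM o g := by
  simp only [LM, h]

theorem single_mul_mul_single_mem_supported (u v : Word n) {g : FreeAlg R n} (hg : g ≠ 0) :
    single u 1 * g * single v 1 ∈ supported R R {w | o.le w (u * LM o g * v)} := by
  intro w hw
  obtain ⟨x, hx, rfl⟩ := Finset.mem_image.mp (support_coeff_mul_single_subset _ _ _ hw)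
  obtain ⟨y, hy, rfl⟩ := Finset.mem_image.mp (support_coeff_single_mul_subset _ _ _ hx)
  exact o.mul_le_mul u v (le_LM o hg hy)

theorem coeff_single_mul_mul_single (u v x : Word n) (g : FreeAlg R n) :
    (single u 1 * g * single v 1).coeff (u * x * v) = g.coeff x := by
  rw [coeff_mul_single_mul, coeff_single_mul_mul, one_mul, mul_one]

end LeadingMonomial

theorem TwoSidedIdeal.algebra_smul_mem {S A : Type*} [CommSemiring S] [Ring A] [Algebra S A]
    (I : TwoSidedIdeal A) (c : S) {x : A} (hx : x ∈ I) : c • x ∈ I := by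
  rw [Algebra.smul_def]
  exact I.mul_mem_left _ _ hx

section Reduction

variable {n : ℕ} (o : MonomialOrdering n) {R : Type} [CommRing R]

theorem sub_smul_mem_supported_lt {m : Word n} {f h : FreeAlg R n}
    (hf : f ∈ supported R R {u | o.le u m}) (hh : h ∈ supported R R {u | o.le u m})
    (hhm : h.coeff m = 1) : f - f.coeff m • h ∈ supported R R {u | o.lt u m} := by
  rw [mem_supported'] at hf hh ⊢
  intro u hu
  by_cases hum : u = m
  · subst hum
    simp [hhm]
  · have hu' : u ∉ {u | o.le u m} := fun h' => h'.elim hum hu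
    simp [hf u hu', hh u hu']

theorem exists_normal_sub_mem {G : Set (FreeAlg R n)} (hmonic : IsMonicSet o G)
    {I : TwoSidedIdeal (FreeAlg R n)} (hGI : ∀ g ∈ G, g ∈ I) (m : Word n) :
    ∀ f ∈ supported R R {u | o.le u m}, ∃ r ∈ supported R R (NSet o G),
      r ∈ supported R R {u | o.le u m} ∧ f - r ∈ I := by
  induction m using o.wellFounded.induction with
  | _ m ih =>
  have strict : ∀ f ∈ supported R R {u | o.lt u m}, ∃ r ∈ supported R R (NSet o G),
      r ∈ supported R R {u | o.le u m} ∧ f - r ∈ I := by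
    intro f hf
    rcases eq_or_ne f 0 with rfl | hf0
    · exact ⟨0, zero_mem _, zero_mem _, by simp⟩
    have hlt : o.lt (LM o f) m := hf (LM_mem_support o hf0)
    obtain ⟨r, hrN, hr, hfr⟩ := ih _ hlt f fun u hu => le_LM o hf0 hu
    exact ⟨r, hrN, supported_mono (fun u hu => Or.inr (o.lt_of_le_of_lt hu hlt)) hr, hfr⟩
  intro f hf
  by_cases hm : m ∈ NSet o G
  · have hsingle : ∀ s : Set (Word n), m ∈ s → single m (1 : R) ∈ supported R R s :=
      fun _ hs => Finsupp.single_mem_supported R 1 hs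
    obtain ⟨r, hrN, hr, hfr⟩ := strict _ (sub_smul_mem_supported_lt o hf
      (hsingle _ (Or.inl rfl)) (by simp))
    refine ⟨r + f.coeff m • single m 1, add_mem hrN (Submodule.smul_mem _ _ (hsingle _ hm)),
      add_mem hr (Submodule.smul_mem _ _ (hsingle _ (Or.inl rfl))), ?_⟩
    convert hfr using 1
    abel
  · simp only [NSet, Set.mem_ofPred_eq, not_forall, not_not] at hm
    obtain ⟨g, hg, u, v, rfl⟩ := hm
    obtain ⟨hg0, hgLC⟩ := hmonic g hg
    have ht : single u 1 * g * single v 1 ∈ I :=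
      I.mul_mem_right _ _ (I.mul_mem_left _ _ (hGI g hg))
    obtain ⟨r, hrN, hr, hfr⟩ := strict _ (sub_smul_mem_supported_lt o hf
      (single_mul_mul_single_mem_supported o u v hg0)
      (by rw [coeff_single_mul_mul_single]; exact hgLC))
    refine ⟨r, hrN, hr, ?_⟩
    convert add_mem hfr (I.algebra_smul_mem (f.coeff (u * LM o g * v)) ht) using 1
    abel

end Reduction

section CoeffIncl

variable {n : ℕ} {S T : Type} [CommRing S] [CommRing T] [Algebra S T]

theorem coeffIncl_eq_mapAlgHom : coeffIncl S T n = mapAlgHom (Word n) (Algebra.ofId S T) := by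
  ext w
  simp [coeffIncl]

theorem coeff_coeffIncl (f : FreeAlg S n) (w : Word n) :
    (coeffIncl S T n f).coeff w = algebraMap S T (f.coeff w) := by
  rw [coeffIncl_eq_mapAlgHom, coeff_mapAlgHom]
  rfl

theorem coeffIncl_single (w : Word n) (a : S) :
    coeffIncl S T n (single w a) = single w (algebraMap S T a) := by
  rw [coeffIncl_eq_mapAlgHom, mapAlgHom_single]
  rfl

theorem coeffIncl_injective (hinj : Function.Injective (algebraMap S T)) :
    Function.Injective (coeffIncl S T n) := fun f g h => by
  ext w
  exact hinj (by rw [← coeff_coeffIncl, ← coeff_coeffIncl, h])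

theorem support_coeff_coeffIncl (hinj : Function.Injective (algebraMap S T)) (f : FreeAlg S n) :
    (coeffIncl S T n f).coeff.support = f.coeff.support := by
  ext w
  simp [coeff_coeffIncl, map_eq_zero_iff _ hinj]

end CoeffIncl

theorem MonoidAlgebra.constr_basis_single {M R M' : Type*} [CommSemiring R] [AddCommMonoid M']
    [Module R M'] (c : M → M') (w : M) (a : R) :
    (basis M R).constr R c (single w a) = a • c w := by
  simp [Module.Basis.constr_apply, basis]

section Functional

variable {n : ℕ} {o : MonomialOrdering n} {S : Type} [CommRing S] {G : Set (FreeAlg S n)}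
  {I : TwoSidedIdeal (FreeAlg S n)}

theorem IsMonicGB.eq_zero_of_mem_supported_NSet (hGB : IsMonicGB o G I) {f : FreeAlg S n}
    (hfI : f ∈ I) (hfN : f ∈ supported S S (NSet o G)) : f = 0 := by
  by_contra hf0
  obtain ⟨g, hg, hdvd⟩ := hGB.2.2 f hfI hf0
  exact hfN (LM_mem_support o hf0) g hg hdvd

theorem IsMonicGB.exists_functional_of_mem_NSet (hGB : IsMonicGB o G I) {m : Word n}
    (hm : m ∈ NSet o G) :
    ∃ c : Word n → S, c m = 1 ∧ (∀ w, o.lt w m → c w = 0) ∧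
      ∀ f ∈ I, (basis (Word n) S).constr S c f = 0 := by
  -- `c w` is the coefficient of `m` in a normal form `r w` of `w`.
  choose r hrN hr hsub using fun w => exists_normal_sub_mem o hGB.2.1 hGB.1 w (single w 1)
    (Finsupp.single_mem_supported S 1 (Or.inl rfl))
  refine ⟨fun w => (r w).coeff m, ?_, ?_, ?_⟩
  · have hrm : single m 1 - r m = 0 :=
      hGB.eq_zero_of_mem_supported_NSet (hsub m)
        (sub_mem (Finsupp.single_mem_supported S 1 hm) (hrN m))
    simp [← sub_eq_zero.mp hrm]
  · intro w hw
    exact mem_supported'.mp (hr w) m fun h => irrefl _ (o.lt_of_le_of_lt h hw)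
  have key : ∀ f : FreeAlg S n, ∃ ρ ∈ supported S S (NSet o G),
      f - ρ ∈ I ∧ (basis (Word n) S).constr S (fun w => (r w).coeff m) f = ρ.coeff m := by
    intro f
    induction f using induction_linear with
    | zero => exact ⟨0, zero_mem _, by simp, by simp⟩
    | add f f' hf hf' =>
      obtain ⟨ρ, hρN, hfρ, hρ⟩ := hf
      obtain ⟨ρ', hρN', hfρ', hρ'⟩ := hf'
      refine ⟨ρ + ρ', add_mem hρN hρN', ?_, by rw [map_add, hρ, hρ', coeff_add]; rfl⟩
      convert I.add_mem hfρ hfρ' using 1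
      abel
    | single w a =>
      refine ⟨a • r w, Submodule.smul_mem _ _ (hrN w), ?_, by simp [constr_basis_single]⟩
      convert I.algebra_smul_mem a (hsub w) using 1
      rw [smul_sub, smul_single', mul_one]
  intro f hf
  obtain ⟨ρ, hρN, hfρ, hρ⟩ := key f
  rw [hρ, hGB.eq_zero_of_mem_supported_NSet (by simpa using I.sub_mem hf hfρ) hρN]
  rfl

end Functional

section BaseChange

variable {n : ℕ} {S A : Type} [CommRing S] [CommRing A] [Algebra S A]

theorem single_mul_coeffIncl_mul_single (u v : Word n) (a b : A) (z : FreeAlg S n) :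
    single u a * coeffIncl S A n z * single v b =
      (a * b) • coeffIncl S A n (single u 1 * z * single v 1) := by
  rw [map_mul, map_mul, coeffIncl_single, coeffIncl_single, map_one, ← mul_one a, ← mul_one b,
    ← smul_single', ← smul_single', smul_mul_assoc, smul_mul_assoc, mul_smul_comm, smul_smul,
    mul_one, mul_one]

theorem constr_algebraMap_eq_zero_of_mem_span {I : TwoSidedIdeal (FreeAlg S n)}
    {c : Word n → S} (hc : ∀ f ∈ I, (basis (Word n) S).constr S c f = 0) {f : FreeAlg A n}
    (hf : f ∈ TwoSidedIdeal.span (coeffIncl S A n '' I)) :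
    (basis (Word n) A).constr A (algebraMap S A ∘ c) f = 0 := by
  set φ := (basis (Word n) A).constr A (algebraMap S A ∘ c)
  have hφ : ∀ z, φ (coeffIncl S A n z) = algebraMap S A ((basis (Word n) S).constr S c z) := by
    intro z
    induction z using induction_linear with
    | zero => simp
    | add z z' hz hz' => rw [map_add, map_add, hz, hz', map_add, map_add]
    | single w a =>
      rw [coeffIncl_single, constr_basis_single, constr_basis_single, Function.comp_apply,
        smul_eq_mul, smul_eq_mul, map_mul]
  have hsand : ∀ z ∈ I, ∀ x y, φ (x * coeffIncl S A n z * y) = 0 := by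
    intro z hz x y
    induction x using induction_linear with
    | zero => simp
    | add x x' hx hx' => rw [add_mul, add_mul, map_add, hx, hx', add_zero]
    | single u a =>
      induction y using induction_linear with
      | zero => simp
      | add y y' hy hy' => rw [mul_add, map_add, hy, hy', add_zero]
      | single v b =>
        rw [single_mul_coeffIncl_mul_single, map_smul, hφ,
          hc _ (I.mul_mem_right _ _ (I.mul_mem_left _ _ hz)), map_zero, smul_zero]
  have := TwoSidedIdeal.span_induction (p := fun x _ => ∀ a b, φ (a * x * b) = 0)
    (by rintro _ ⟨z, hz, rfl⟩; exact hsand z hz) (by simp)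
    (fun x y _ _ hx hy a b => by rw [mul_add, add_mul, map_add, hx, hy, add_zero])
    (fun x _ hx a b => by rw [mul_neg, neg_mul, map_neg, hx, neg_zero])
    (fun c x _ hx a b => by rw [← mul_assoc a c]; exact hx _ _)
    (fun c x _ hx a b => by rw [← mul_assoc a x c, mul_assoc _ c b]; exact hx _ _) hf
  simpa using this 1 1

end BaseChange

theorem IsMonicGB.exists_dvd_LM_of_mem_span_coeffIncl {n : ℕ} {o : MonomialOrdering n}
    {S A : Type} [CommRing S] [CommRing A] [Algebra S A] {G : Set (FreeAlg S n)}
    {I : TwoSidedIdeal (FreeAlg S n)} (hGB : IsMonicGB o G I) {f : FreeAlg A n}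
    (hf : f ∈ TwoSidedIdeal.span (coeffIncl S A n '' I)) (hf0 : f ≠ 0) :
    ∃ g ∈ G, WordDvd (LM o g) (LM o f) := by
  by_contra! hm
  obtain ⟨c, hcm, hclt, hcI⟩ := hGB.exists_functional_of_mem_NSet (m := LM o f) hm
  have hφf : (basis (Word n) A).constr A (algebraMap S A ∘ c) f = f.coeff (LM o f) := by
    rw [Module.Basis.constr_apply]
    change (f.coeff.sum fun w a => a • algebraMap S A (c w)) = _
    refine (Finsupp.sum_eq_single (LM o f) (fun w hw hne => ?_) (by simp)).trans (by simp [hcm])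
    rcases le_LM o hf0 (Finsupp.mem_support_iff.mpr hw) with rfl | hlt
    · exact absurd rfl hne
    · simp [hclt w hlt]
  exact Finsupp.mem_support_iff.mp (LM_mem_support o hf0)
    (by rw [← hφf, constr_algebraMap_eq_zero_of_mem_span hcI hf])

section Subring

variable {n : ℕ} (o : MonomialOrdering n) {S T : Type} [CommRing S] [CommRing T] [Algebra S T]

theorem LM_coeffIncl (hinj : Function.Injective (algebraMap S T)) (f : FreeAlg S n) :
    LM o (coeffIncl S T n f) = LM o f :=
  LM_congr_support o (support_coeff_coeffIncl hinj f)

theorem lmReduced_image_coeffIncl_iff (hinj : Function.Injective (algebraMap S T))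
    {G : Set (FreeAlg S n)} :
    LMReduced o (coeffIncl S T n '' G) ↔ LMReduced o G := by
  simp only [LMReduced, Set.forall_mem_image, LM_coeffIncl o hinj,
    (coeffIncl_injective hinj).ne_iff]

theorem isMonicSet_image_coeffIncl_iff (hinj : Function.Injective (algebraMap S T))
    {G : Set (FreeAlg S n)} :
    IsMonicSet o (coeffIncl S T n '' G) ↔ IsMonicSet o G := by
  simp only [IsMonicSet, LC, Set.forall_mem_image, LM_coeffIncl o hinj, coeff_coeffIncl,
    map_ne_zero_iff _ (coeffIncl_injective hinj), ← map_one (algebraMap S T), hinj.eq_iff]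

theorem isMonicGB_span_image_coeffIncl_iff (hinj : Function.Injective (algebraMap S T))
    {G : Set (FreeAlg S n)} :
    IsMonicGB o (coeffIncl S T n '' G) (TwoSidedIdeal.span (coeffIncl S T n '' G)) ↔
      IsMonicGB o G (TwoSidedIdeal.span G) := by
  rw [IsMonicGB, IsMonicGB, isMonicSet_image_coeffIncl_iff o hinj]
  refine ⟨fun ⟨_, hmonic, hGB⟩ => ⟨fun g hg => TwoSidedIdeal.subset_span hg, hmonic, ?_⟩,
    fun hGB => ⟨fun _ hg => TwoSidedIdeal.subset_span hg, hGB.2.1, ?_⟩⟩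
  · intro f hf hf0
    have hspan : TwoSidedIdeal.span G ≤
        TwoSidedIdeal.comap (coeffIncl S T n) (TwoSidedIdeal.span (coeffIncl S T n '' G)) :=
      TwoSidedIdeal.span_le.mpr fun g hg =>
        (TwoSidedIdeal.mem_comap _).mpr (TwoSidedIdeal.subset_span ⟨g, hg, rfl⟩)
    obtain ⟨_, ⟨g, hg, rfl⟩, hdvd⟩ := hGB _ ((TwoSidedIdeal.mem_comap _).mp (hspan hf))
      ((map_ne_zero_iff _ (coeffIncl_injective hinj)).mpr hf0)
    exact ⟨g, hg, by rwa [LM_coeffIncl o hinj, LM_coeffIncl o hinj] at hdvd⟩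
  · intro f hf hf0
    obtain ⟨g, hg, hdvd⟩ := IsMonicGB.exists_dvd_LM_of_mem_span_coeffIncl hGB
      (TwoSidedIdeal.span_mono (Set.image_mono TwoSidedIdeal.subset_span) hf) hf0
    exact ⟨_, ⟨g, hg, rfl⟩, by rwa [LM_coeffIncl o hinj]⟩

end Subring

/-- **Proposition 2.7.**  Let `R` be a commutative ring and `R'` a subring of `R` with the
same identity.  For a subset `G ⊆ R'⟨X₁,...,Xₙ⟩` the following are equivalent: (i) `G` is an
LM-reduced monic Gröbner basis of the ideal `⟨G⟩` in `R'⟨X⟩`; (ii) `G` (viewed in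
`R⟨X⟩`) is an LM-reduced monic Gröbner basis of the ideal `⟨G⟩` in `R⟨X⟩`, with respect to
the same monomial ordering on the (common) set of words. -/
theorem monicGB_subring_iff {R : Type} [CommRing R] {n : ℕ} (o : MonomialOrdering n)
    (R' : Subring R) (G : Set (FreeAlg ↥R' n)) :
    (LMReduced o G ∧ IsMonicGB o G (TwoSidedIdeal.span G)) ↔
      (LMReduced o (⇑(coeffIncl ↥R' R n) '' G) ∧
        IsMonicGB o (⇑(coeffIncl ↥R' R n) '' G)
          (TwoSidedIdeal.span (⇑(coeffIncl ↥R' R n) '' G))) := by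
  have hinj : Function.Injective (algebraMap R' R) := Subtype.val_injective
  exact and_congr (lmReduced_image_coeffIncl_iff o hinj).symm
    (isMonicGB_span_image_coeffIncl_iff o hinj).symm
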